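/- arXiv:2302.02882 — 2 statements merged into one kernel-verified Lean document; each statement's English description precedes it below -/
import Mathlib

section
/- The r-th order implicit Taylor method is A-stable for even r in the following sense: for the Dahlquist equation y' = μ y with Re(μ) ≤ 0 and r = 2, the stability function R(z) = 1/(1 − z + z²/2) satisfies |R(z)| ≤ 1 for all complex z with Re(z) ≤ 0. -/
/-!
Writing `a = 1 - Re z` and `y = Im z`, one has
`4 |1 - z + z²/2|² = (a² + 1)² + 2 (a² - 1) y² + y⁴`,
and every term on the right is nonnegative with `(a² + 1)² ≥ 4` as soon as `a ≥ 1`,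
i.e. on the closed left half-plane.
-/

namespace Complex

theorem four_mul_normSq_one_sub_add_sq_div_two (z : ℂ) :
    4 * normSq (1 - z + z ^ 2 / 2) =
      ((1 - z.re) ^ 2 + 1) ^ 2 + 2 * ((1 - z.re) ^ 2 - 1) * z.im ^ 2 + z.im ^ 4 := by
  simp only [normSq_apply, add_re, add_im, sub_re, sub_im, one_re, one_im, div_ofNat_re,
    div_ofNat_im, pow_two, mul_re, mul_im]
  ring

theorem one_le_norm_one_sub_add_sq_div_two {z : ℂ} (hz : z.re ≤ 0) :
    1 ≤ ‖1 - z + z ^ 2 / 2‖ := by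
  have h_one_le : 1 ≤ (1 - z.re) ^ 2 := by nlinarith
  have h_normSq : 1 ≤ normSq (1 - z + z ^ 2 / 2) := by
    have h_expand := four_mul_normSq_one_sub_add_sq_div_two z
    nlinarith [sq_nonneg (z.im ^ 2)]
  rw [← Complex.sq_norm] at h_normSq
  exact (one_le_sq_iff₀ (norm_nonneg _)).mp h_normSq

end Complex

theorem stmt_10 :
    ∀ z : ℂ, z.re ≤ 0 → ‖(1 / (1 - z + z ^ 2 / 2))‖ ≤ 1 := by
  intro z hz
  rw [one_div, norm_inv]
  exact inv_le_one_of_one_le₀ (Complex.one_le_norm_one_sub_add_sq_div_two hz)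
end

section
/- The 1-norm condition number of the matrix 𝓕'_EJ (the DerSol Jacobian of the third-order implicit Taylor method for y' = −y/ε with fixed Δt = 1) satisfies cond₁(𝓕'_EJ) = O(ε^{−1}) as ε → 0⁺: there exist constants c, ε₀ > 0 with cond₁(𝓕'_EJ) ≤ c/ε for all 0 < ε ≤ ε₀. -/
/-- Operator norm induced by the ℓ¹ vector norm: maximum absolute column sum. -/
noncomputable def colNorm {n : Type*} [Fintype n] [Nonempty n] (A : Matrix n n ℝ) : ℝ :=
  Finset.univ.sup' Finset.univ_nonempty (fun j => ∑ i, |A i j|)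

/-- 1-norm condition number. -/
noncomputable def cond1 {n : Type*} [Fintype n] [Nonempty n] [DecidableEq n]
    (A : Matrix n n ℝ) : ℝ :=
  colNorm A * colNorm A⁻¹

/-- The EJ-DerSol Jacobian of the third-order implicit Taylor method for
`y' = -y/ε` with `Δt = 1`. -/
noncomputable def FEJ (eps : ℝ) : Matrix (Fin 4) (Fin 4) ℝ :=
  !![1, -1, 1 / 2, -1 / 6;
     -1 / eps, -1, 0, 0;
     0, -1 / eps, -1, 0;
     0, 0, -1 / eps, -1]

/-!
Clearing denominators, `FEJ ε` has the explicit inverse `q(ε)⁻¹ • P(ε)` with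
`q = fejDenom`, `q(ε) = 6ε³ + 6ε² + 3ε + 1`, and `P = fejInvNum` a matrix of polynomials whose
coefficients lie in `[-6, 6]`. Since `q(ε) ≥ 1 + ε + ε² + ε³`, every entry of the inverse is
bounded by `6` for all `ε > 0`, while for `ε ≤ 1` every entry of `FEJ ε` is bounded by `1/ε`.
Bounding each column sum by four times the largest entry gives `cond₁(FEJ ε) ≤ (4/ε) · 24`.
-/

section ColNorm

variable {n : Type*} [Fintype n] [Nonempty n]

lemma colNorm_nonneg (A : Matrix n n ℝ) : 0 ≤ colNorm A :=
  let j := Classical.arbitrary n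
  (Finset.sum_nonneg fun i _ => abs_nonneg (A i j)).trans
    (Finset.le_sup' (fun j => ∑ i, |A i j|) (Finset.mem_univ j))

lemma colNorm_le_card_mul {A : Matrix n n ℝ} {M : ℝ} (h : ∀ i j, |A i j| ≤ M) :
    colNorm A ≤ Fintype.card n * M :=
  Finset.sup'_le _ _ fun j _ => by
    simpa using Finset.sum_le_sum fun i (_ : i ∈ Finset.univ) => h i j

end ColNorm

lemma abs_FEJ_apply_le {e : ℝ} (he : 0 < e) (he1 : e ≤ 1) (i j : Fin 4) :
    |FEJ e i j| ≤ e⁻¹ := by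
  have h1 : 1 ≤ e⁻¹ := one_le_inv₀ he |>.mpr he1
  fin_cases i <;> fin_cases j <;>
    simp [FEJ, abs_div, abs_of_pos he, abs_inv] <;> linarith

def fejDenom (e : ℝ) : ℝ := 6 * e ^ 3 + 6 * e ^ 2 + 3 * e + 1

def fejInvNum (e : ℝ) : Matrix (Fin 4) (Fin 4) ℝ :=
  !![6 * e ^ 3, -(6 * e ^ 3 + 3 * e ^ 2 + e), 3 * e ^ 3 + e ^ 2, -e ^ 3;
     -(6 * e ^ 2), -(6 * e ^ 3), -(3 * e ^ 2 + e), e ^ 2;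
     6 * e, 6 * e ^ 2, -(6 * e ^ 3 + 6 * e ^ 2), -e;
     -6, -(6 * e), 6 * e ^ 2 + 6 * e, -(6 * e ^ 3 + 6 * e ^ 2 + 3 * e)]

lemma fejDenom_pos {e : ℝ} (he : 0 ≤ e) : 0 < fejDenom e := by
  unfold fejDenom; positivity

lemma FEJ_mul_fejInvNum {e : ℝ} (he : 0 < e) :
    FEJ e * ((fejDenom e)⁻¹ • fejInvNum e) = 1 := by
  have hq : 6 * e ^ 3 + 6 * e ^ 2 + 3 * e + 1 ≠ 0 := (fejDenom_pos he.le).ne'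
  have he' := he.ne'
  ext i j
  fin_cases i <;> fin_cases j <;>
    simp [FEJ, fejInvNum, fejDenom, Matrix.mul_apply, Fin.sum_univ_four] <;> field_simp <;> ring

lemma abs_fejInvNum_apply_le {e : ℝ} (he : 0 ≤ e) (i j : Fin 4) :
    |fejInvNum e i j| ≤ 6 * fejDenom e := by
  have h2 := pow_nonneg he 2
  have h3 := pow_nonneg he 3
  fin_cases i <;> fin_cases j <;>
    refine abs_le.mpr ⟨?_, ?_⟩ <;> simp [fejInvNum, fejDenom] <;> nlinarith

lemma abs_FEJ_inv_apply_le {e : ℝ} (he : 0 < e) (i j : Fin 4) :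
    |(FEJ e)⁻¹ i j| ≤ 6 := by
  have hq := fejDenom_pos he.le
  rw [Matrix.inv_eq_right_inv (FEJ_mul_fejInvNum he), Matrix.smul_apply, smul_eq_mul,
    abs_mul, abs_inv, abs_of_pos hq, inv_mul_le_iff₀ hq, mul_comm]
  exact abs_fejInvNum_apply_le he.le i j

theorem stmt_15 :
    ∃ c eps₀ : ℝ, 0 < c ∧ 0 < eps₀ ∧
      ∀ eps : ℝ, 0 < eps → eps ≤ eps₀ → cond1 (FEJ eps) ≤ c / eps := by
  refine ⟨96, 1, by norm_num, by norm_num, fun e he he1 => ?_⟩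
  have hA : colNorm (FEJ e) ≤ 4 * e⁻¹ := by
    simpa using colNorm_le_card_mul (abs_FEJ_apply_le he he1)
  have hB : colNorm (FEJ e)⁻¹ ≤ 4 * 6 := by
    simpa using colNorm_le_card_mul (abs_FEJ_inv_apply_le he)
  calc cond1 (FEJ e) = colNorm (FEJ e) * colNorm (FEJ e)⁻¹ := rfl
    _ ≤ 4 * e⁻¹ * (4 * 6) := mul_le_mul hA hB (colNorm_nonneg _) (by positivity)
    _ = 96 / e := by ring
end
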